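/- arXiv:2411.14587 — 2 statements merged into one kernel-verified Lean document; each statement's English description precedes it below -/
import Mathlib

section
/- If φ: S^1 → S^1 is an orientation-preserving diffeomorphism, then the operators Π⁺ φ* Π⁻ and Π⁻ φ* Π⁺ are smoothing, i.e., they map distributions (distributional one-forms) on S^1 to smooth one-forms. -/
/-!
Write `ψ(θ) = n φ(θ) - m θ`, so that the `(m, n)` coefficient is `(2π)⁻¹ ∫ φ' e^{iψ}`. When `m`
and `n` have opposite signs, `|ψ'| = |n| φ' + |m| ≥ δ (1 + |m| + |n|)` with `δ > 0` depending only
on `min φ'`. Since `e^{iψ} = (iψ')⁻¹ (e^{iψ})'`, an integration by parts replaces the amplitude `A`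
by `-((iψ')⁻¹ A)'`, the boundary terms cancelling by periodicity. As `ψ'' = n φ''` is
`O(1 + |m| + |n|)` together with all its derivatives, every derivative of `(iψ')⁻¹` is
`O((1 + |m| + |n|)⁻¹)`, so each integration by parts gains one such factor, uniformly in `(m, n)`.
-/

open MeasureTheory Real

noncomputable def fourierCoef (w : ℝ → ℂ) (k : ℤ) : ℂ :=
  (1 / (2 * (Real.pi : ℂ))) * ∫ θ in (0:ℝ)..(2 * Real.pi),
    Complex.exp (-Complex.I * (k : ℂ) * (θ : ℂ)) * w θ

open Function
open scoped ContDiff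

namespace Function.Periodic

variable {T : ℝ}

theorem exists_norm_le {E : Type*} [NormedAddCommGroup E] {f : ℝ → E} (hf : Periodic f T)
    (hT : T ≠ 0) (hcont : Continuous f) : ∃ M, ∀ x, ‖f x‖ ≤ M := by
  obtain ⟨M, hM⟩ := isBounded_iff_forall_norm_le.mp (hf.isBounded_of_continuous hT hcont)
  exact ⟨M, fun x => hM _ (Set.mem_range_self x)⟩

theorem exists_pos_le {f : ℝ → ℝ} (hf : Periodic f T) (hT : T ≠ 0) (hcont : Continuous f)
    (hpos : ∀ x, 0 < f x) : ∃ c, 0 < c ∧ ∀ x, c ≤ f x := by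
  obtain ⟨_, ⟨x₀, rfl⟩, hmin⟩ :=
    (hf.compact_of_continuous hT hcont).exists_isLeast (Set.range_nonempty f)
  exact ⟨f x₀, hpos x₀, fun x => hmin (Set.mem_range_self x)⟩

protected theorem deriv {E : Type*} [NormedAddCommGroup E] [NormedSpace ℝ E] {f : ℝ → E}
    (hf : Periodic f T) : Periodic (deriv f) T := fun x => by
  rw [← deriv_comp_add_const, show (fun y => f (y + T)) = f from funext hf]

end Function.Periodic

theorem periodic_deriv_of_add_const {f : ℝ → ℝ} {T a : ℝ} (hf : ∀ x, f (x + T) = f x + a) :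
    Periodic (deriv f) T := fun x => by
  rw [← deriv_comp_add_const, show (fun y => f (y + T)) = fun y => f y + a from funext hf,
    deriv_add_const]

section UniformDerivBound

variable {ι : Type*} {Q : ℕ} {f g : ι → ℝ → ℂ} {w v : ι → ℝ}

def UniformDerivBound (Q : ℕ) (f : ι → ℝ → ℂ) (w : ι → ℝ) : Prop :=
  (∀ i, ContDiff ℝ ∞ (f i)) ∧ ∃ C, ∀ q ≤ Q, ∀ i θ, ‖iteratedDeriv q (f i) θ‖ ≤ C * w i

namespace UniformDerivBound

theorem zero (hf : ∀ i, ContDiff ℝ ∞ (f i)) (h₀ : ∃ C, ∀ i θ, ‖f i θ‖ ≤ C * w i) :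
    UniformDerivBound 0 f w := by
  obtain ⟨C, hC⟩ := h₀
  exact ⟨hf, C, fun q hq i θ => by simpa [Nat.le_zero.mp hq] using hC i θ⟩

open Finset in
theorem mul (hf : UniformDerivBound Q f w) (hg : UniformDerivBound Q g v) :
    UniformDerivBound Q (fun i θ => f i θ * g i θ) (fun i => w i * v i) := by
  obtain ⟨hf_smooth, Cf, hCf⟩ := hf
  obtain ⟨hg_smooth, Cg, hCg⟩ := hg
  refine ⟨fun i => (hf_smooth i).mul (hg_smooth i), 2 ^ Q * Cf * Cg, fun q hq i θ => ?_⟩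
  have hfw : 0 ≤ Cf * w i := (norm_nonneg _).trans (hCf 0 (Nat.zero_le Q) i θ)
  have hgv : 0 ≤ Cg * v i := (norm_nonneg _).trans (hCg 0 (Nat.zero_le Q) i θ)
  rw [iteratedDeriv_fun_mul ((hf_smooth i).of_le (by exact_mod_cast le_top)).contDiffAt
    ((hg_smooth i).of_le (by exact_mod_cast le_top)).contDiffAt]
  calc _ ≤ ∑ j ∈ range (q + 1), (q.choose j : ℝ) * ((Cf * w i) * (Cg * v i)) := by
        refine (norm_sum_le _ _).trans (sum_le_sum fun j hj => ?_)
        have hjq : j ≤ q := Nat.lt_succ_iff.mp (mem_range.mp hj)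
        rw [norm_mul, norm_mul, Complex.norm_natCast, mul_assoc]
        gcongr
        · exact hCf j (hjq.trans hq) i θ
        · exact hCg (q - j) ((q.sub_le j).trans hq) i θ
    _ = 2 ^ q * ((Cf * w i) * (Cg * v i)) := by
        rw [← sum_mul, ← Nat.cast_sum, Nat.sum_range_choose, Nat.cast_pow, Nat.cast_ofNat]
    _ ≤ 2 ^ Q * ((Cf * w i) * (Cg * v i)) := by gcongr; exact one_le_two
    _ = 2 ^ Q * Cf * Cg * (w i * v i) := by ring

theorem const_mul (hf : UniformDerivBound Q f w) (c : ι → ℂ) :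
    UniformDerivBound Q (fun i θ => c i * f i θ) (fun i => ‖c i‖ * w i) := by
  obtain ⟨hf_smooth, C, hC⟩ := hf
  refine ⟨fun i => contDiff_const.mul (hf_smooth i), C, fun q hq i θ => ?_⟩
  rw [iteratedDeriv_const_mul_field, norm_mul, mul_left_comm]
  exact mul_le_mul_of_nonneg_left (hC q hq i θ) (norm_nonneg _)

theorem mono (hf : UniformDerivBound Q f w) (hw : ∀ i, 0 ≤ w i) {w' : ι → ℝ}
    (hww' : ∀ i, w i ≤ w' i) : UniformDerivBound Q f w' := by
  obtain ⟨hf_smooth, C, hC⟩ := hf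
  refine ⟨hf_smooth, max C 0, fun q hq i θ => ?_⟩
  calc _ ≤ C * w i := hC q hq i θ
    _ ≤ max C 0 * w i := mul_le_mul_of_nonneg_right (le_max_left C 0) (hw i)
    _ ≤ max C 0 * w' i := mul_le_mul_of_nonneg_left (hww' i) (le_max_right C 0)

protected theorem deriv (hf : UniformDerivBound (Q + 1) f w) :
    UniformDerivBound Q (fun i => deriv (f i)) w := by
  obtain ⟨hf_smooth, C, hC⟩ := hf
  refine ⟨fun i => (contDiff_infty_iff_deriv.mp (hf_smooth i)).2, C, fun q hq i θ => ?_⟩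
  rw [← iteratedDeriv_succ']
  exact hC (q + 1) (by omega) i θ

theorem of_deriv (hf : ∀ i, ContDiff ℝ ∞ (f i)) (hw : ∀ i, 0 ≤ w i)
    (h₀ : ∃ C, ∀ i θ, ‖f i θ‖ ≤ C * w i) (hd : UniformDerivBound Q (fun i => deriv (f i)) w) :
    UniformDerivBound (Q + 1) f w := by
  obtain ⟨C₀, hC₀⟩ := h₀
  obtain ⟨-, C, hC⟩ := hd
  refine ⟨hf, max C₀ C, fun q hq i θ => ?_⟩
  cases q with
  | zero =>
    calc _ ≤ C₀ * w i := by simpa using hC₀ i θ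
      _ ≤ _ := mul_le_mul_of_nonneg_right (le_max_left C₀ C) (hw i)
  | succ q =>
    calc _ ≤ C * w i := by rw [iteratedDeriv_succ']; exact hC q (by omega) i θ
      _ ≤ _ := mul_le_mul_of_nonneg_right (le_max_right C₀ C) (hw i)

theorem of_periodic {a : ℝ → ℂ} {T : ℝ} (ha : ContDiff ℝ ∞ a) (ha_per : Periodic a T)
    (hT : T ≠ 0) (Q : ℕ) : UniformDerivBound Q (fun (_ : ι) => a) fun _ => 1 := by
  have h₀ {b : ℝ → ℂ} (hb : ContDiff ℝ ∞ b) (hb_per : Periodic b T) :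
      ∃ C, ∀ (_ : ι) θ, ‖b θ‖ ≤ C * 1 := by
    obtain ⟨M, hM⟩ := hb_per.exists_norm_le hT hb.continuous
    exact ⟨M, fun _ θ => by simpa using hM θ⟩
  induction Q generalizing a with
  | zero => exact zero (fun _ => ha) (h₀ ha ha_per)
  | succ Q ih =>
    exact of_deriv (fun _ => ha) (fun _ => zero_le_one) (h₀ ha ha_per)
      (ih (contDiff_infty_iff_deriv.mp ha).2 ha_per.deriv)

end UniformDerivBound

end UniformDerivBound

section NonstationaryPhase

variable {ψ : ℝ → ℝ} {a : ℝ → ℂ} {T : ℝ}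

noncomputable def phaseRecip (ψ : ℝ → ℝ) (θ : ℝ) : ℂ := (deriv ψ θ * Complex.I)⁻¹

noncomputable def ibpAmplitude (ψ : ℝ → ℝ) (a : ℝ → ℂ) : ℕ → ℝ → ℂ
  | 0 => a
  | k + 1 => deriv fun θ => ibpAmplitude ψ a k θ * phaseRecip ψ θ

theorem hasDerivAt_exp_mul_I (hψ : Differentiable ℝ ψ) (θ : ℝ) :
    HasDerivAt (fun t => Complex.exp (ψ t * Complex.I))
      (Complex.exp (ψ θ * Complex.I) * (deriv ψ θ * Complex.I)) θ :=
  ((hψ θ).hasDerivAt.ofReal_comp.mul_const Complex.I).cexp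

theorem periodic_exp_mul_I {k : ℤ} (hψ : ∀ θ, ψ (θ + T) = ψ θ + 2 * π * k) :
    Periodic (fun θ => Complex.exp (ψ θ * Complex.I)) T := fun θ => by
  simp only [hψ, Complex.ofReal_add, Complex.ofReal_mul, Complex.ofReal_intCast,
    Complex.ofReal_ofNat, add_mul, Complex.exp_add]
  rw [show (2 * π : ℂ) * k * Complex.I = k * (2 * π * Complex.I) by ring,
    Complex.exp_int_mul_two_pi_mul_I, mul_one]

theorem norm_phaseRecip (θ : ℝ) : ‖phaseRecip ψ θ‖ = |deriv ψ θ|⁻¹ := by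
  simp [phaseRecip]

theorem contDiff_phaseRecip (hψ : ContDiff ℝ ∞ ψ) (hψ' : ∀ θ, deriv ψ θ ≠ 0) :
    ContDiff ℝ ∞ (phaseRecip ψ) :=
  ((Complex.ofRealCLM.contDiff.comp (contDiff_infty_iff_deriv.mp hψ).2).mul contDiff_const).inv
    fun θ => by simp [hψ' θ]

theorem deriv_phaseRecip (hψ : ContDiff ℝ ∞ ψ) (hψ' : ∀ θ, deriv ψ θ ≠ 0) (θ : ℝ) :
    deriv (phaseRecip ψ) θ =
      -Complex.I * deriv (deriv ψ) θ * phaseRecip ψ θ * phaseRecip ψ θ := by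
  have hψ'' : HasDerivAt (fun t => ((deriv ψ t : ℝ) : ℂ) * Complex.I)
      (deriv (deriv ψ) θ * Complex.I) θ :=
    (((contDiff_infty_iff_deriv.mp hψ).2.differentiable (by simp)) θ).hasDerivAt.ofReal_comp
      |>.mul_const Complex.I
  unfold phaseRecip
  rw [(hψ''.fun_inv (by simp [hψ' θ])).deriv]
  field_simp

theorem periodic_phaseRecip (hψ_per : Periodic (deriv ψ) T) : Periodic (phaseRecip ψ) T :=
  fun θ => by simp [phaseRecip, hψ_per θ]

theorem contDiff_ibpAmplitude (ha : ContDiff ℝ ∞ a) (hψ : ContDiff ℝ ∞ ψ)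
    (hψ' : ∀ θ, deriv ψ θ ≠ 0) (k : ℕ) : ContDiff ℝ ∞ (ibpAmplitude ψ a k) := by
  induction k with
  | zero => exact ha
  | succ k ih => exact (contDiff_infty_iff_deriv.mp (ih.mul (contDiff_phaseRecip hψ hψ'))).2

theorem periodic_ibpAmplitude (ha_per : Periodic a T) (hψ_per : Periodic (deriv ψ) T) (k : ℕ) :
    Periodic (ibpAmplitude ψ a k) T := by
  induction k with
  | zero => exact ha_per
  | succ k ih => exact (ih.mul (periodic_phaseRecip hψ_per)).deriv

theorem integral_ibpAmplitude_succ (ha : ContDiff ℝ ∞ a) (ha_per : Periodic a T)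
    (hψ : ContDiff ℝ ∞ ψ) (hψ' : ∀ θ, deriv ψ θ ≠ 0) (hψ_per : Periodic (deriv ψ) T)
    (he_per : Periodic (fun θ => Complex.exp (ψ θ * Complex.I)) T) (k : ℕ) :
    ∫ θ in 0..T, ibpAmplitude ψ a (k + 1) θ * Complex.exp (ψ θ * Complex.I) =
      -∫ θ in 0..T, ibpAmplitude ψ a k θ * Complex.exp (ψ θ * Complex.I) := by
  set u := fun θ => ibpAmplitude ψ a k θ * phaseRecip ψ θ
  have hu : ContDiff ℝ ∞ u := (contDiff_ibpAmplitude ha hψ hψ' k).mul (contDiff_phaseRecip hψ hψ')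
  have hu_per : Periodic u T :=
    (periodic_ibpAmplitude ha_per hψ_per k).mul (periodic_phaseRecip hψ_per)
  have hψ_cont := hψ.continuous
  have hψ'_cont := (contDiff_infty_iff_deriv.mp hψ).2.continuous
  have hparts := intervalIntegral.integral_mul_deriv_eq_deriv_mul
    (fun θ _ => ((hu.differentiable (by simp)) θ).hasDerivAt)
    (fun θ _ => hasDerivAt_exp_mul_I (hψ.differentiable (by simp)) θ)
    ((contDiff_infty_iff_deriv.mp hu).2.continuous.intervalIntegrable 0 T)
    ((by fun_prop : Continuous fun θ => Complex.exp (ψ θ * Complex.I) *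
      (deriv ψ θ * Complex.I)).intervalIntegrable 0 T)
  have hcancel (θ : ℝ) : u θ * (Complex.exp (ψ θ * Complex.I) * (deriv ψ θ * Complex.I)) =
      ibpAmplitude ψ a k θ * Complex.exp (ψ θ * Complex.I) := by
    simp only [u, phaseRecip]
    field_simp [hψ' θ]
  have hboundary : u T * Complex.exp (ψ T * Complex.I) = u 0 * Complex.exp (ψ 0 * Complex.I) := by
    simpa using congrArg₂ (· * ·) (hu_per 0) (he_per 0)
  simp only [hcancel, hboundary, sub_self, zero_sub] at hparts
  rw [hparts, neg_neg]
  rfl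

theorem norm_integral_ibpAmplitude (ha : ContDiff ℝ ∞ a) (ha_per : Periodic a T)
    (hψ : ContDiff ℝ ∞ ψ) (hψ' : ∀ θ, deriv ψ θ ≠ 0) (hψ_per : Periodic (deriv ψ) T)
    (he_per : Periodic (fun θ => Complex.exp (ψ θ * Complex.I)) T) (k : ℕ) :
    ‖∫ θ in 0..T, ibpAmplitude ψ a k θ * Complex.exp (ψ θ * Complex.I)‖ =
      ‖∫ θ in 0..T, a θ * Complex.exp (ψ θ * Complex.I)‖ := by
  induction k with
  | zero => rfl
  | succ k ih =>
    rw [integral_ibpAmplitude_succ ha ha_per hψ hψ' hψ_per he_per, norm_neg, ih]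

end NonstationaryPhase

section UniformNonstationaryPhase

variable {ι : Type*} {ψ : ι → ℝ → ℝ} {lam : ι → ℝ} {δ : ℝ}

theorem uniformDerivBound_phaseRecip (hψ : ∀ i, ContDiff ℝ ∞ (ψ i)) (hδ : 0 < δ)
    (hlam : ∀ i, 0 < lam i) (hlow : ∀ i θ, δ * lam i ≤ |deriv (ψ i) θ|)
    (hψ'' : ∀ Q, UniformDerivBound Q (fun i θ => ((deriv (deriv (ψ i)) θ : ℝ) : ℂ)) lam) (Q : ℕ) :
    UniformDerivBound Q (fun i => phaseRecip (ψ i)) fun i => (lam i)⁻¹ := by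
  have hψ' (i : ι) (θ : ℝ) : deriv (ψ i) θ ≠ 0 :=
    abs_pos.mp ((mul_pos hδ (hlam i)).trans_le (hlow i θ))
  have hsmooth (i : ι) := contDiff_phaseRecip (hψ i) (hψ' i)
  have h₀ : ∃ C, ∀ i θ, ‖phaseRecip (ψ i) θ‖ ≤ C * (lam i)⁻¹ := ⟨δ⁻¹, fun i θ => by
    rw [norm_phaseRecip, ← mul_inv]
    exact inv_anti₀ (mul_pos hδ (hlam i)) (hlow i θ)⟩
  induction Q with
  | zero => exact .zero hsmooth h₀
  | succ Q ih =>
    refine .of_deriv hsmooth (fun i => (inv_pos.mpr (hlam i)).le) h₀ ?_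
    simp only [funext (deriv_phaseRecip (hψ _) (hψ' _))]
    refine ((((hψ'' Q).const_mul fun _ => -Complex.I).mul ih).mul ih).mono
      (fun i => by have := hlam i; positivity) fun i => le_of_eq ?_
    field_simp [(hlam i).ne']
    simp

theorem uniformDerivBound_ibpAmplitude {a : ℝ → ℂ} {T : ℝ} (ha : ContDiff ℝ ∞ a)
    (ha_per : Periodic a T) (hT : T ≠ 0) (hψ : ∀ i, ContDiff ℝ ∞ (ψ i)) (hδ : 0 < δ)
    (hlam : ∀ i, 0 < lam i) (hlow : ∀ i θ, δ * lam i ≤ |deriv (ψ i) θ|)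
    (hψ'' : ∀ Q, UniformDerivBound Q (fun i θ => ((deriv (deriv (ψ i)) θ : ℝ) : ℂ)) lam)
    (k Q : ℕ) :
    UniformDerivBound Q (fun i => ibpAmplitude (ψ i) a k) fun i => (lam i)⁻¹ ^ k := by
  induction k generalizing Q with
  | zero => simpa [ibpAmplitude] using UniformDerivBound.of_periodic ha ha_per hT Q
  | succ k ih =>
    simp only [pow_succ]
    exact ((ih (Q + 1)).mul
      (uniformDerivBound_phaseRecip hψ hδ hlam hlow hψ'' (Q + 1))).deriv

theorem exists_norm_integral_mul_exp_le {a : ℝ → ℂ} {T : ℝ} {k : ι → ℤ} (ha : ContDiff ℝ ∞ a)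
    (ha_per : Periodic a T) (hT : T ≠ 0) (hψ : ∀ i, ContDiff ℝ ∞ (ψ i))
    (hψ_lift : ∀ i θ, ψ i (θ + T) = ψ i θ + 2 * π * k i) (hδ : 0 < δ)
    (hlam : ∀ i, 0 < lam i) (hlow : ∀ i θ, δ * lam i ≤ |deriv (ψ i) θ|)
    (hψ'' : ∀ Q, UniformDerivBound Q (fun i θ => ((deriv (deriv (ψ i)) θ : ℝ) : ℂ)) lam)
    (N : ℕ) :
    ∃ C, ∀ i, ‖∫ θ in 0..T, a θ * Complex.exp (ψ i θ * Complex.I)‖ ≤ C * (lam i)⁻¹ ^ N := by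
  obtain ⟨-, C, hC⟩ := uniformDerivBound_ibpAmplitude ha ha_per hT hψ hδ hlam hlow hψ'' N 0
  refine ⟨C * |T|, fun i => ?_⟩
  have hψ' (θ : ℝ) : deriv (ψ i) θ ≠ 0 :=
    abs_pos.mp ((mul_pos hδ (hlam i)).trans_le (hlow i θ))
  rw [← norm_integral_ibpAmplitude ha ha_per (hψ i) hψ' (periodic_deriv_of_add_const (hψ_lift i))
    (periodic_exp_mul_I (hψ_lift i)) N]
  calc _ ≤ C * (lam i)⁻¹ ^ N * |T - 0| :=
        intervalIntegral.norm_integral_le_of_norm_le_const fun θ _ => by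
          simpa [Complex.norm_exp_ofReal_mul_I] using hC 0 le_rfl i θ
    _ = C * |T| * (lam i)⁻¹ ^ N := by rw [sub_zero]; ring

end UniformNonstationaryPhase

section PullbackMatrixCoefficients

def oppositeSigns : Set (ℤ × ℤ) := {p | (0 < p.1 ∧ p.2 < 0) ∨ (p.1 < 0 ∧ 0 < p.2)}

noncomputable def pullbackPhase (φ : ℝ → ℝ) (p : ℤ × ℤ) (θ : ℝ) : ℝ := p.2 * φ θ - p.1 * θ

variable {φ : ℝ → ℝ}

theorem fourierCoef_exp_mul_deriv (φ : ℝ → ℝ) (m n : ℤ) :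
    fourierCoef (fun θ => Complex.exp (Complex.I * (n : ℂ) * ((φ θ : ℝ) : ℂ))
        * ((deriv φ θ : ℝ) : ℂ)) m =
      (((2 * π)⁻¹ : ℝ) : ℂ) * ∫ θ in 0..2 * π,
        ((deriv φ θ : ℝ) : ℂ) * Complex.exp (pullbackPhase φ (m, n) θ * Complex.I) := by
  unfold fourierCoef
  congr 1
  · simp
  refine intervalIntegral.integral_congr fun θ _ => ?_
  rw [show (pullbackPhase φ (m, n) θ : ℂ) * Complex.I =
      -Complex.I * m * θ + Complex.I * n * φ θ by simp [pullbackPhase]; ring, Complex.exp_add]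
  ring

theorem pullbackPhase_add_two_pi (hφlift : ∀ θ, φ (θ + 2 * π) = φ θ + 2 * π) (p : ℤ × ℤ)
    (θ : ℝ) : pullbackPhase φ p (θ + 2 * π) = pullbackPhase φ p θ + 2 * π * ↑(p.2 - p.1) := by
  simp only [pullbackPhase, hφlift]
  push_cast
  ring

theorem contDiff_pullbackPhase (hφ : ContDiff ℝ ∞ φ) (p : ℤ × ℤ) :
    ContDiff ℝ ∞ (pullbackPhase φ p) :=
  (contDiff_const.mul hφ).sub (contDiff_const.mul contDiff_id)

theorem deriv_pullbackPhase (hφ : Differentiable ℝ φ) (p : ℤ × ℤ) :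
    deriv (pullbackPhase φ p) = fun θ => p.2 * deriv φ θ - p.1 := by
  funext θ
  exact (((hφ θ).hasDerivAt.const_mul _).sub ((hasDerivAt_id θ).const_mul _)).deriv.trans
    (by simp)

theorem deriv_deriv_pullbackPhase (hφ : Differentiable ℝ φ) (hφ' : Differentiable ℝ (deriv φ))
    (p : ℤ × ℤ) : deriv (deriv (pullbackPhase φ p)) = fun θ => p.2 * deriv (deriv φ) θ := by
  rw [deriv_pullbackPhase hφ]
  funext θ
  exact (((hφ' θ).hasDerivAt.const_mul _).sub_const _).deriv

theorem le_abs_intCast_mul_sub {c x : ℝ} {m n : ℤ} (hc : 0 < c) (hx : c ≤ x)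
    (hmn : (m, n) ∈ oppositeSigns) :
    min c 1 / 2 * (1 + |(m : ℝ)| + |(n : ℝ)|) ≤ |n * x - m| := by
  have hδc : min c 1 ≤ c := min_le_left c 1
  have hδ1 : min c 1 ≤ 1 := min_le_right c 1
  have hδ : 0 < min c 1 := lt_min hc one_pos
  rcases hmn with ⟨hm, hn⟩ | ⟨hm, hn⟩
  · have hm' : (1 : ℝ) ≤ m := by exact_mod_cast hm
    have hn' : (n : ℝ) ≤ -1 := by exact_mod_cast Int.le_sub_one_of_lt hn
    rw [abs_of_pos (by linarith), abs_of_neg (by linarith), abs_of_neg (by nlinarith)]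
    nlinarith
  · have hm' : (m : ℝ) ≤ -1 := by exact_mod_cast Int.le_sub_one_of_lt hm
    have hn' : (1 : ℝ) ≤ n := by exact_mod_cast hn
    rw [abs_of_neg (by linarith), abs_of_pos (by linarith), abs_of_pos (by nlinarith)]
    nlinarith

theorem uniformDerivBound_deriv_deriv_pullbackPhase (hφ : ContDiff ℝ ∞ φ)
    (hφ'_per : Periodic (deriv φ) (2 * π)) (Q : ℕ) :
    UniformDerivBound Q
      (fun (p : oppositeSigns) θ => ((deriv (deriv (pullbackPhase φ p)) θ : ℝ) : ℂ))
      fun p => 1 + |(p.1.1 : ℝ)| + |(p.1.2 : ℝ)| := by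
  have hφ' := (contDiff_infty_iff_deriv.mp hφ).2
  have hφ'' := (contDiff_infty_iff_deriv.mp hφ').2
  simp only [deriv_deriv_pullbackPhase (hφ.differentiable (by simp))
    (hφ'.differentiable (by simp)), Complex.ofReal_mul, Complex.ofReal_intCast]
  refine ((UniformDerivBound.of_periodic (Complex.ofRealCLM.contDiff.comp hφ'')
      (fun θ => by simp [hφ'_per.deriv θ]) two_pi_pos.ne' Q).const_mul
      fun (p : oppositeSigns) => (p.1.2 : ℂ)).mono (fun p => by positivity) fun p => ?_
  simp only [Complex.norm_intCast, mul_one]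
  linarith [abs_nonneg (p.1.1 : ℝ)]

theorem exists_norm_integral_pullback_le (hφ : ContDiff ℝ ∞ φ)
    (hφlift : ∀ θ, φ (θ + 2 * π) = φ θ + 2 * π) (hφ' : ∀ θ, 0 < deriv φ θ) (N : ℕ) :
    ∃ C, ∀ m n : ℤ, (m, n) ∈ oppositeSigns →
      ‖∫ θ in 0..2 * π, ((deriv φ θ : ℝ) : ℂ) * Complex.exp (pullbackPhase φ (m, n) θ * Complex.I)‖
        ≤ C * (1 + |(m : ℝ)| + |(n : ℝ)|)⁻¹ ^ N := by
  have hφ'_smooth : ContDiff ℝ ∞ (deriv φ) := (contDiff_infty_iff_deriv.mp hφ).2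
  have hφ'_per : Periodic (deriv φ) (2 * π) := periodic_deriv_of_add_const hφlift
  obtain ⟨c, hc, hc_le⟩ := hφ'_per.exists_pos_le two_pi_pos.ne' hφ'_smooth.continuous hφ'
  obtain ⟨C, hC⟩ := exists_norm_integral_mul_exp_le
    (ψ := fun (p : oppositeSigns) => pullbackPhase φ p)
    (Complex.ofRealCLM.contDiff.comp hφ'_smooth) (fun θ => by simp [hφ'_per θ]) two_pi_pos.ne'
    (fun p => contDiff_pullbackPhase hφ p) (fun p => pullbackPhase_add_two_pi hφlift p)
    (by positivity : 0 < min c 1 / 2) (fun p => by positivity)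
    (fun p θ => by
      rw [deriv_pullbackPhase (hφ.differentiable (by simp))]
      exact le_abs_intCast_mul_sub hc (hc_le θ) p.2)
    (uniformDerivBound_deriv_deriv_pullbackPhase hφ hφ'_per) N
  exact ⟨C, fun m n hmn => hC ⟨(m, n), hmn⟩⟩

end PullbackMatrixCoefficients

/-- If `φ : S¹ → S¹` is an orientation-preserving diffeomorphism (given by a smooth lift with
`φ(θ+2π) = φ(θ)+2π`, `φ' > 0`), then the operators `Π⁺ φ* Π⁻` and `Π⁻ φ* Π⁺` on one-forms
are smoothing: their Schwartz kernels are smooth.  Equivalently, the matrix coefficients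
`a(m,n) = (1/2π) ∫ e^{-imθ} e^{inφ(θ)} φ'(θ) dθ` of the pullback `φ*` decay rapidly when
`m` and `n` have opposite signs, so that the operator maps distributional one-forms on `S¹`
to smooth one-forms. -/
theorem stmt_6 (φ : ℝ → ℝ) (hφ : ContDiff ℝ (⊤ : ℕ∞) φ)
    (hφlift : ∀ θ : ℝ, φ (θ + 2 * Real.pi) = φ θ + 2 * Real.pi)
    (hφ' : ∀ θ : ℝ, 0 < deriv φ θ) :
    ∀ N : ℕ, ∃ C : ℝ, 0 < C ∧ ∀ m n : ℤ,
      ((0 < m ∧ n < 0) ∨ (m < 0 ∧ 0 < n)) →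
      ‖fourierCoef (fun θ => Complex.exp (Complex.I * (n : ℂ) * ((φ θ : ℝ) : ℂ))
          * ((deriv φ θ : ℝ) : ℂ)) m‖
        ≤ C / (1 + |(m : ℝ)| + |(n : ℝ)|) ^ N := by
  intro N
  obtain ⟨C, hC⟩ := exists_norm_integral_pullback_le hφ hφlift hφ' N
  refine ⟨max ((2 * π)⁻¹ * C) 1, by positivity, fun m n hmn => ?_⟩
  rw [fourierCoef_exp_mul_deriv, norm_mul, Complex.norm_real, Real.norm_of_nonneg (by positivity),
    div_eq_mul_inv, ← inv_pow]
  calc _ ≤ (2 * π)⁻¹ * (C * (1 + |(m : ℝ)| + |(n : ℝ)|)⁻¹ ^ N) :=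
        mul_le_mul_of_nonneg_left (hC m n hmn) (by positivity)
    _ ≤ _ := by rw [← mul_assoc]; gcongr; exact le_max_left _ _
end

section
/- Let b be an orientation-preserving C^∞ diffeomorphism of S^1 and set T = Id − K on H := Π⁻L² × Π⁺L² (one-forms), where K = [[0, Π⁻b*Π⁺],[Π⁺(b^{−1})*Π⁻, 0]]. Then K is a compact (indeed smoothing) operator, and hence T is Fredholm of index 0; combined with triviality of its nullspace, T is invertible on H, and T^{−1} = Id + R' where R' is smoothing. -/
/-! Since `K` is compact and `1 - K` is injective, the Fredholm alternative makes `1 - K`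
invertible. From `T⁻¹ (1 - K) = 1` we get `T⁻¹ - 1 = T⁻¹ K`, which is smoothing because
smoothing operators form an ideal. -/

open Module End in
theorem IsCompactOperator.isUnit_one_sub {𝕜 X : Type*} [NontriviallyNormedField 𝕜]
    [NormedAddCommGroup X] [NormedSpace 𝕜 X] [CompleteSpace X] {K : X →L[𝕜] X}
    (hK : IsCompactOperator K) (hker : LinearMap.ker ((1 - K : X →L[𝕜] X) : X →ₗ[𝕜] X) = ⊥) :
    IsUnit (1 - K) := by
  have hnot : ¬ HasEigenvalue (K : End 𝕜 X) 1 := by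
    rw [hasEigenvalue_iff, eigenspace_def, ← LinearMap.ker_neg, ne_eq, not_not]
    simpa using hker
  simpa [spectrum.mem_resolventSet_iff] using
    (hK.hasEigenvalue_or_mem_resolventSet one_ne_zero).resolve_left hnot

theorem Units.val_inv_sub_one {R : Type*} [Ring R] (u : Rˣ) {k : R} (hu : (u : R) = 1 - k) :
    (↑u⁻¹ : R) - 1 = ↑u⁻¹ * k := by
  rw [← sub_sub_cancel 1 k, ← hu, mul_sub, mul_one, u.inv_mul]

theorem stmt_15_general {H : Type*} [NormedAddCommGroup H] [InnerProductSpace ℂ H]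
    [CompleteSpace H]
    (Smoothing : (H →L[ℂ] H) → Prop)
    (hcpt : ∀ A : H →L[ℂ] H, Smoothing A → IsCompactOperator A)
    (hideal : ∀ A B : H →L[ℂ] H, Smoothing A → Smoothing (A.comp B) ∧ Smoothing (B.comp A))
    (K : H →L[ℂ] H) (hK : Smoothing K)
    (hker : LinearMap.ker (((1 : H →L[ℂ] H) - K) : H →ₗ[ℂ] H) = ⊥) :
    IsCompactOperator K ∧
    ∃ Tinv : H →L[ℂ] H,
      ((1 : H →L[ℂ] H) - K).comp Tinv = 1 ∧ Tinv.comp ((1 : H →L[ℂ] H) - K) = 1 ∧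
      Smoothing (Tinv - 1) := by
  have hKc : IsCompactOperator K := hcpt K hK
  obtain ⟨T, hT⟩ := hKc.isUnit_one_sub hker
  refine ⟨hKc, ↑T⁻¹, ?_, ?_, ?_⟩
  · rw [← hT, ← ContinuousLinearMap.mul_def, T.mul_inv]
  · rw [← hT, ← ContinuousLinearMap.mul_def, T.inv_mul]
  · rw [T.val_inv_sub_one hT]
    exact (hideal K _ hK).2

/-- Abstract form of invertibility of `T = Id − K` on `H = Π⁻L² × Π⁺L²`: if `K` is a
smoothing operator (smoothing operators form a two-sided ideal contained in the compact
operators, stable under addition and negation) and `T = 1 − K` has trivial nullspace, then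
`K` is compact, `T` is Fredholm of index `0` and hence invertible, and `T⁻¹ = Id + R'`
with `R'` smoothing. -/
theorem stmt_15 {H : Type*} [NormedAddCommGroup H] [InnerProductSpace ℂ H]
    [CompleteSpace H]
    (Smoothing : (H →L[ℂ] H) → Prop)
    (hcpt : ∀ A : H →L[ℂ] H, Smoothing A → IsCompactOperator A)
    (hideal : ∀ A B : H →L[ℂ] H, Smoothing A → Smoothing (A.comp B) ∧ Smoothing (B.comp A))
    (hadd : ∀ A B : H →L[ℂ] H, Smoothing A → Smoothing B → Smoothing (A + B))
    (hneg : ∀ A : H →L[ℂ] H, Smoothing A → Smoothing (-A))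
    (K : H →L[ℂ] H) (hK : Smoothing K)
    (hker : LinearMap.ker (((1 : H →L[ℂ] H) - K) : H →ₗ[ℂ] H) = ⊥) :
    IsCompactOperator K ∧
    ∃ Tinv : H →L[ℂ] H,
      ((1 : H →L[ℂ] H) - K).comp Tinv = 1 ∧ Tinv.comp ((1 : H →L[ℂ] H) - K) = 1 ∧
      Smoothing (Tinv - 1) :=
  stmt_15_general Smoothing hcpt hideal K hK hker
end
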